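/- arXiv:0901.0205 — 5 statements merged into one kernel-verified Lean document; each statement's English description precedes it below -/
import Mathlib

section
/- For every finite multigraph (V, E, a, b) with nonnegative edge-end weights w there exists an orientation O such that for every vertex v, the weighted in-degree of v under O, namely the sum of w e v over all edges e with O e = v, is at least ( (sum of w e v over all edges e incident to v) − (maximum of w e v over all edges e incident to v) ) / 2, where the maximum is taken to be 0 if no edge is incident to v. -/
/-!
At a vertex `v`, pair off the incident edges greedily: the two heaviest (for `w · v`), then the
two heaviest of the rest, and so on. The lighter edge of each pair outweighs everything in later
pairs, so the total weight at `v` is at most the maximum plus twice the sum of the pair minima.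
Every pair has two edges, and an edge lies in at most one pair at each of its two endpoints, so
Hall's condition holds and distinct representatives can be chosen from all pairs. Orienting each
representative towards the vertex of its pair gives `v` at least the minimum of each of its pairs.
-/

open Finset Function

section Pairing

variable {α : Type*} [DecidableEq α]

structure IsPairing (S : Finset α) (P : Finset (α × α)) : Prop where
  ne : ∀ p ∈ P, p.1 ≠ p.2
  subset : ∀ p ∈ P, {p.1, p.2} ⊆ S
  pairwiseDisjoint : (P : Set (α × α)).PairwiseDisjoint fun p => ({p.1, p.2} : Finset α)

theorem IsPairing.empty (S : Finset α) : IsPairing S ∅ :=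
  ⟨by simp, by simp, by simp⟩

theorem IsPairing.insert {S : Finset α} {P : Finset (α × α)} {x y : α}
    (hP : IsPairing ((S.erase x).erase y) P) (hx : x ∈ S) (hy : y ∈ S.erase x) :
    IsPairing S (insert (x, y) P) := by
  have hxy : x ≠ y := fun h => by simp [h] at hy
  have hout : ∀ p ∈ P, x ∉ ({p.1, p.2} : Finset α) ∧ y ∉ ({p.1, p.2} : Finset α) :=
    fun p hp => ⟨fun h => by simpa using hP.subset p hp h,
      fun h => by simpa using hP.subset p hp h⟩
  refine ⟨?_, ?_, ?_⟩
  · simpa [hxy] using hP.ne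
  · simp only [mem_insert, forall_eq_or_imp]
    refine ⟨?_, fun p hp => (hP.subset p hp).trans ((erase_subset _ _).trans (erase_subset _ _))⟩
    simp [insert_subset_iff, hx, mem_of_mem_erase hy]
  · rw [coe_insert]
    refine hP.pairwiseDisjoint.insert fun p hp _ => ?_
    simpa only [disjoint_left, mem_insert, mem_singleton, forall_eq_or_imp, forall_eq] using
      hout p hp

theorem exists_isPairing_sum_le (g : α → ℝ) (S : Finset α) (hg : ∀ x ∈ S, 0 ≤ g x) {M : ℝ}
    (hM0 : 0 ≤ M) (hM : ∀ x ∈ S, g x ≤ M) :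
    ∃ P, IsPairing S P ∧ ∑ x ∈ S, g x ≤ M + 2 * ∑ p ∈ P, min (g p.1) (g p.2) := by
  induction S using Finset.strongInduction generalizing M with
  | H S ih =>
  rcases S.eq_empty_or_nonempty with rfl | hS
  · exact ⟨∅, .empty _, by simpa using hM0⟩
  obtain ⟨x, hx, hx_max⟩ := S.exists_max_image g hS
  rcases (S.erase x).eq_empty_or_nonempty with hSx | hSx
  · refine ⟨∅, .empty _, ?_⟩
    rw [← add_sum_erase S g hx, hSx]
    simpa using hM x hx
  obtain ⟨y, hy, hy_max⟩ := (S.erase x).exists_max_image g hSx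
  have hyS := mem_of_mem_erase hy
  obtain ⟨P, hP, hsum⟩ := ih ((S.erase x).erase y) ((erase_ssubset hy).trans (erase_ssubset hx))
    (fun z hz => hg z (mem_of_mem_erase (mem_of_mem_erase hz))) (hg y hyS)
    (fun z hz => hy_max z (mem_of_mem_erase hz))
  have hxy_notMem : (x, y) ∉ P := fun h => by simpa using hP.subset _ h (mem_insert_self _ _)
  refine ⟨_, hP.insert hx hy, ?_⟩
  rw [sum_insert hxy_notMem, min_eq_right (hx_max y hyS), ← add_sum_erase S g hx,
    ← add_sum_erase _ g hy]
  linarith [hM x hx]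

end Pairing

section DiteSup

variable {β : Type*} {s : Finset β} {g : β → ℝ}

theorem dite_sup'_nonneg (hg : ∀ x ∈ s, 0 ≤ g x) :
    0 ≤ if h : s.Nonempty then s.sup' h g else 0 := by
  split_ifs with h
  · exact (hg _ h.choose_spec).trans (le_sup' g h.choose_spec)
  · exact le_rfl

theorem le_dite_sup' {x : β} (hx : x ∈ s) : g x ≤ if h : s.Nonempty then s.sup' h g else 0 := by
  rw [dif_pos ⟨x, hx⟩]
  exact le_sup' g hx

end DiteSup

theorem exists_injective_mem_of_card_le {ι β : Type*} [DecidableEq β] (t : ι → Finset β) {k : ℕ}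
    (hk : 0 < k) (ht : ∀ i, k ≤ #(t i)) (hdeg : ∀ (s : Finset ι) (x : β), #{i ∈ s | x ∈ t i} ≤ k) :
    ∃ f : ι → β, Injective f ∧ ∀ i, f i ∈ t i := by
  refine (all_card_le_biUnion_card_iff_exists_injective t).1 fun s => le_of_mul_le_mul_right ?_ hk
  refine card_mul_le_card_mul (fun i x => x ∈ t i) (fun i hi => ?_) (fun x _ => hdeg s x)
  exact (ht i).trans <| card_le_card fun x hx => mem_filter.2 ⟨mem_biUnion.2 ⟨i, hi, hx⟩, hx⟩

theorem exists_orientation_sum_min_le {V E : Type*} [Fintype E] [DecidableEq V] [DecidableEq E]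
    (a b : E → V) (w : E → V → ℝ) (hw : ∀ e v, 0 ≤ w e v) (P : V → Finset (E × E))
    (hP : ∀ v, IsPairing {e | a e = v ∨ b e = v} (P v)) :
    ∃ O : E → V, (∀ e, O e = a e ∨ O e = b e) ∧
      ∀ v, ∑ p ∈ P v, min (w p.1 v) (w p.2 v) ≤ ∑ e with O e = v, w e v := by
  let t : (Σ v, P v) → Finset E := fun q => {q.2.1.1, q.2.1.2}
  have hinc : ∀ q e, e ∈ t q → a e = q.1 ∨ b e = q.1 := fun q e he => by
    simpa using (hP q.1).subset _ q.2.2 he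
  have hdeg : ∀ (s : Finset (Σ v, P v)) (e : E), #{q ∈ s | e ∈ t q} ≤ 2 := by
    intro s e
    refine (card_le_card_of_injOn (t := {a e, b e}) Sigma.fst (fun q hq => ?_) ?_).trans card_le_two
    · rcases hinc q e (mem_filter.1 hq).2 with h | h <;> simp [h]
    rintro ⟨v, p⟩ hp ⟨v', p'⟩ hp' (rfl : v = v')
    have : p = p' := Subtype.ext <| (hP v).pairwiseDisjoint.elim_finset p.2 p'.2 e
      (mem_filter.1 hp).2 (mem_filter.1 hp').2
    rw [this]
  obtain ⟨f, hf, hft⟩ := exists_injective_mem_of_card_le t two_pos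
    (fun q => (card_pair ((hP q.1).ne _ q.2.2)).ge) hdeg
  refine ⟨extend f Sigma.fst a, fun e => ?_, fun v => ?_⟩
  · by_cases he : ∃ q, f q = e
    · obtain ⟨q, rfl⟩ := he
      rw [hf.extend_apply]
      exact (hinc q _ (hft q)).imp Eq.symm Eq.symm
    · exact Or.inl (extend_apply' _ _ _ he)
  calc ∑ p ∈ P v, min (w p.1 v) (w p.2 v)
      ≤ ∑ p : P v, w (f ⟨v, p⟩) v := by
        rw [← sum_coe_sort]
        gcongr with p
        rcases mem_insert.1 (hft ⟨v, p⟩) with h | h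
        · exact h ▸ min_le_left _ _
        · exact (mem_singleton.1 h) ▸ min_le_right _ _
    _ = ∑ e ∈ univ.image fun p : P v => f ⟨v, p⟩, w e v := by
        rw [sum_image fun p _ p' _ h => sigma_mk_injective (hf h)]
    _ ≤ ∑ e with extend f Sigma.fst a e = v, w e v := by
        refine sum_le_sum_of_subset_of_nonneg (fun e he => ?_) fun e _ _ => hw e v
        obtain ⟨p, -, rfl⟩ := mem_image.1 he
        simp [hf.extend_apply]

theorem weighted_orientation_exists_general
    {V E : Type*} [Fintype E] [DecidableEq V]
    (a b : E → V) (w : E → V → ℝ) (hw : ∀ e v, 0 ≤ w e v) :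
    ∃ O : E → V,
      (∀ e, O e = a e ∨ O e = b e) ∧
      ∀ v : V,
        (∑ e ∈ Finset.univ.filter (fun e => O e = v), w e v) ≥
          ((∑ e ∈ Finset.univ.filter (fun e => a e = v ∨ b e = v), w e v) -
            (if h : (Finset.univ.filter (fun e => a e = v ∨ b e = v)).Nonempty then
              (Finset.univ.filter (fun e => a e = v ∨ b e = v)).sup' h (fun e => w e v)
            else 0)) / 2 := by
  classical
  choose P hP hsum using fun v =>
    exists_isPairing_sum_le (w · v) (univ.filter fun e => a e = v ∨ b e = v) (fun e _ => hw e v)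
      (dite_sup'_nonneg fun e _ => hw e v) fun e he => le_dite_sup' (g := (w · v)) he
  obtain ⟨O, hO, hin⟩ := exists_orientation_sum_min_le a b w hw P hP
  exact ⟨O, hO, fun v => by linarith [hsum v, hin v]⟩

/-- For every finite multigraph `(V, E, a, b)` with nonnegative edge-end
weights `w` there exists an orientation `O` (assigning to each edge a head among its two
endpoints) such that for every vertex `v`, the weighted in-degree of `v` under `O` is at
least `((sum of w e v over edges incident to v) - (max of w e v over edges incident to v))/2`,
the maximum being `0` when no edge is incident to `v`. -/
theorem weighted_orientation_exists
    {V E : Type*} [Fintype V] [Fintype E] [DecidableEq V]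
    (a b : E → V) (w : E → V → ℝ) (hw : ∀ e v, 0 ≤ w e v) :
    ∃ O : E → V,
      (∀ e, O e = a e ∨ O e = b e) ∧
      ∀ v : V,
        (∑ e ∈ Finset.univ.filter (fun e => O e = v), w e v) ≥
          ((∑ e ∈ Finset.univ.filter (fun e => a e = v ∨ b e = v), w e v) -
            (if h : (Finset.univ.filter (fun e => a e = v ∨ b e = v)).Nonempty then
              (Finset.univ.filter (fun e => a e = v ∨ b e = v)).sup' h (fun e => w e v)
            else 0)) / 2 :=
  weighted_orientation_exists_general a b w hw
end

section
/- Let T be a finite tree whose vertex set is partitioned into a set 𝒜 of agents and a set I of items, whose every edge joins an agent to an item, and in which every item vertex has degree at most 2. Then for every agent A ∈ 𝒜 there exists an injective function f from 𝒜 \ {A} to I such that for every agent A' ∈ 𝒜 \ {A}, the item f A' is adjacent to A' in T. -/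
/-!
Send every agent other than `A` to its neighbour on a shortest path towards `A`. That neighbour
is an item, hence not `A`, so it has a neighbour one step closer to `A` still. If two agents were
sent to the same item, that item would have three distinct neighbours — two farther from `A`
and one closer — contradicting the degree bound.
-/

namespace SimpleGraph

variable {V : Type*} {G : SimpleGraph V} {a u v x y : V}

lemma Reachable.exists_adj_dist_add_one_eq (hr : G.Reachable u a) (hu : u ≠ a) :
    ∃ v, G.Adj u v ∧ G.dist v a + 1 = G.dist u a := by
  obtain ⟨p, hp⟩ := hr.exists_walk_length_eq_dist
  cases p with
  | nil => exact absurd rfl hu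
  | @cons _ v _ hadj q =>
    refine ⟨v, hadj, le_antisymm ?_ ?_⟩
    · have := dist_le q
      rw [Walk.length_cons] at hp
      omega
    · have := hadj.reachable.dist_triangle_left a
      rwa [dist_eq_one_iff_adj.mpr hadj, add_comm] at this

lemma Reachable.eq_of_adj_of_dist_eq_add_one (hr : G.Reachable v a) (hv : v ≠ a)
    (hfin : (G.neighborSet v).Finite) (hdeg : (G.neighborSet v).ncard ≤ 2)
    (hx : G.Adj x v) (hy : G.Adj y v)
    (hxd : G.dist v a + 1 = G.dist x a) (hyd : G.dist v a + 1 = G.dist y a) : x = y := by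
  by_contra hxy
  obtain ⟨w, hw, hwd⟩ := hr.exists_adj_dist_add_one_eq hv
  have hxw : x ≠ w := by rintro rfl; omega
  have hyw : y ≠ w := by rintro rfl; omega
  have hsub : {x, y, w} ⊆ G.neighborSet v := by
    rintro z (rfl | rfl | rfl)
    exacts [hx.symm, hy.symm, hw]
  have hcard : ({x, y, w} : Set V).ncard = 3 := Set.ncard_eq_three.mpr ⟨x, y, w, hxy, hxw, hyw, rfl⟩
  have := Set.ncard_le_ncard hsub hfin
  omega

end SimpleGraph

/-- Let `T` be a finite tree on vertex set `V`, whose vertices are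
partitioned into agents (`Ag`) and items (the complement of `Ag`), such that every edge joins
an agent to an item and every item vertex has degree at most `2`. Then for every agent `A`
there is a function `f`, injective on `Ag \ {A}`, assigning to every other agent `A'` an item
`f A'` adjacent to `A'` in `T`. -/
theorem tree_assignment_exists
    {V : Type*} [Fintype V] (T : SimpleGraph V) (hT : T.IsTree)
    (Ag : Set V)
    (hbip : ∀ u v, T.Adj u v → (u ∈ Ag ↔ v ∉ Ag))
    (hdeg : ∀ v, v ∉ Ag → (T.neighborSet v).ncard ≤ 2)
    (A : V) (hA : A ∈ Ag) :
    ∃ f : V → V, Set.InjOn f (Ag \ {A}) ∧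
      ∀ A' ∈ Ag \ {A}, f A' ∉ Ag ∧ T.Adj A' (f A') := by
  have hconn := hT.connected
  have step : ∀ x ∈ Ag \ {A}, ∃ v, T.Adj x v ∧ T.dist v A + 1 = T.dist x A :=
    fun x hx => (hconn.preconnected x A).exists_adj_dist_add_one_eq hx.2
  choose! f hadj hdist using step
  have hitem : ∀ x ∈ Ag \ {A}, f x ∉ Ag := fun x hx => (hbip x (f x) (hadj x hx)).mp hx.1
  refine ⟨f, fun x hx y hy hxy => ?_, fun x hx => ⟨hitem x hx, hadj x hx⟩⟩
  have hfA : f x ≠ A := fun h => hitem x hx (h ▸ hA)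
  exact (hconn.preconnected (f x) A).eq_of_adj_of_dist_eq_add_one hfA (Set.toFinite _)
    (hdeg _ (hitem x hx)) (hadj x hx) (hxy ▸ hadj y hy) (hdist x hx) (hxy ▸ hdist y hy)
end

section
/- Let I be a finite set of n items with n ≥ 1, let u : I → ℝ be nonnegative, let M > 0, and define u' : I → ℝ by u' i = u i · (2n / M) if u i ≥ M / (2n), and u' i = 0 otherwise. Then: (1) for every subset S ⊆ I with ∑_{i ∈ S} u i ≥ M, one has ∑_{i ∈ S} u' i ≥ n; and (2) for every real α ≥ 1 and every subset S ⊆ I with ∑_{i ∈ S} u' i ≥ n / α, one has ∑_{i ∈ S} u i ≥ M / (2α). -/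
/-!
`u'` is `u` with the values below `t = M/(2n)` zeroed out, rescaled by `1/t`. Zeroing out loses
at most `t` per item, hence at most `n t = M/2` on any set, which gives (1); and it never
increases a nonnegative sum, which gives (2).
-/

open Finset

section Truncation

variable {ι α : Type*} [AddCommGroup α] [LinearOrder α] [IsOrderedAddMonoid α]

theorem sum_sub_card_nsmul_le_sum_ite (S : Finset ι) (u : ι → α) {t : α} (ht : 0 ≤ t) :
    ∑ i ∈ S, u i - #S • t ≤ ∑ i ∈ S, if t ≤ u i then u i else 0 := by
  have hpoint : ∀ i ∈ S, u i ≤ (if t ≤ u i then u i else 0) + t := by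
    intro i _
    split_ifs with h
    · exact le_add_of_nonneg_right ht
    · simpa using (not_le.mp h).le
  have := sum_le_sum hpoint
  rw [sum_add_distrib, sum_const] at this
  exact sub_le_iff_le_add.mpr this

theorem sum_ite_le_sum (S : Finset ι) {u : ι → α} (hu : ∀ i ∈ S, 0 ≤ u i) (t : α) :
    ∑ i ∈ S, (if t ≤ u i then u i else 0) ≤ ∑ i ∈ S, u i :=
  sum_le_sum fun i hi => by split_ifs <;> simp [hu i hi]

end Truncation

/-- polynomially bounded utilities. Let `I` be a finite set of `n ≥ 1`
items, `u : I → ℝ` nonnegative, `M > 0`, and define `u' i = u i · (2n/M)` when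
`u i ≥ M/(2n)` and `u' i = 0` otherwise. Then (1) every subset of total `u`-utility at least
`M` has total `u'`-utility at least `n`, and (2) for every `α ≥ 1`, every subset of total
`u'`-utility at least `n/α` has total `u`-utility at least `M/(2α)`. -/
theorem polynomially_bounded_utilities
    {I : Type*} [Fintype I] (n : ℕ) (hn : 1 ≤ n) (hcard : Fintype.card I = n)
    (u : I → ℝ) (hu : ∀ i, 0 ≤ u i) (M : ℝ) (hM : 0 < M)
    (u' : I → ℝ)
    (hu' : ∀ i, u' i = if M / (2 * n) ≤ u i then u i * (2 * n / M) else 0) :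
    (∀ S : Finset I, M ≤ ∑ i ∈ S, u i → (n : ℝ) ≤ ∑ i ∈ S, u' i) ∧
    (∀ α : ℝ, 1 ≤ α → ∀ S : Finset I,
      (n : ℝ) / α ≤ ∑ i ∈ S, u' i → M / (2 * α) ≤ ∑ i ∈ S, u i) := by
  have hn0 : (0 : ℝ) < n := by exact_mod_cast hn
  have hc : (0 : ℝ) < 2 * n / M := by positivity
  have hsum_u' : ∀ S : Finset I,
      ∑ i ∈ S, u' i = 2 * n / M * ∑ i ∈ S, if M / (2 * n) ≤ u i then u i else 0 := by
    intro S
    rw [mul_sum]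
    exact sum_congr rfl fun i _ => by rw [hu']; split_ifs <;> ring
  refine ⟨fun S hS => ?_, fun α hα S hS => ?_⟩
  · have hcardS : (#S : ℝ) ≤ n := by exact_mod_cast hcard ▸ card_le_univ S
    have htrunc := sum_sub_card_nsmul_le_sum_ite S u (t := M / (2 * n)) (by positivity)
    rw [nsmul_eq_mul] at htrunc
    calc (n : ℝ) = 2 * n / M * (M - n * (M / (2 * n))) := by field_simp; ring
      _ ≤ 2 * n / M * (∑ i ∈ S, u i - #S * (M / (2 * n))) := by gcongr
      _ ≤ ∑ i ∈ S, u' i := by rw [hsum_u']; gcongr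
  · have hα0 : 0 < α := zero_lt_one.trans_le hα
    have hle : ∑ i ∈ S, u' i ≤ 2 * n / M * ∑ i ∈ S, u i := by
      rw [hsum_u']
      exact mul_le_mul_of_nonneg_left (sum_ite_le_sum S (fun i _ => hu i) _) hc.le
    calc M / (2 * α) = n / α / (2 * n / M) := by field_simp
      _ ≤ ∑ i ∈ S, u i := by rw [div_le_iff₀' hc]; linarith
end

section
/- Let I be a finite set, u : I → ℝ nonnegative, M a real number, and let z : Finset I → ℝ be nonnegative with ∑_{S ⊆ I} z S = 1 and such that z S > 0 implies ∑_{i ∈ S} u i ≥ M. Let J = { i ∈ I : ∑_{S : i ∈ S} z S = 1 } be the set of integrally allocated items, and let U = ⋃ { S : z S > 0 } be the union of the configurations in the support of z. Then for every item i* ∈ I \ J, one has ∑_{i ∈ U \ (J ∪ {i*})} u i ≥ M − ∑_{i ∈ J} u i. -/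
/-!
Some configuration in the support of `z` avoids `i*`, since otherwise the configurations
containing `i*` would carry all the mass and `i*` would be integral. For the same reason every
integral item lies in every configuration of the support. Such a configuration `S` thus contains
`J`, lies in `U` and misses `i*`, so `M ≤ u(S) = u(J) + u(S \ J) ≤ u(J) + u(U \ (J ∪ {i*}))`.
-/

namespace Finset

variable {ι R : Type*} [AddCommGroup R] [PartialOrder R] [IsOrderedAddMonoid R]

theorem sum_filter_eq_sum_iff_of_nonneg {s : Finset ι} {f : ι → R} (p : ι → Prop)
    [DecidablePred p] (hf : ∀ a ∈ s, 0 ≤ f a) :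
    ∑ a ∈ s with p a, f a = ∑ a ∈ s, f a ↔ ∀ a ∈ s, 0 < f a → p a := by
  rw [← sum_filter_add_sum_filter_not s p f, left_eq_add,
    sum_eq_zero_iff_of_nonneg fun a ha => hf a (mem_filter.1 ha).1]
  refine ⟨fun h a ha hpos => ?_, fun h a ha => ?_⟩
  · by_contra hpa
    exact hpos.ne' (h a (mem_filter.2 ⟨ha, hpa⟩))
  · obtain ⟨has, hpa⟩ := mem_filter.1 ha
    exact ((hf a has).lt_or_eq.resolve_left fun hpos => hpa (h a has hpos)).symm

end Finset

open Finset

/-- utility bound for fractionally allocated items. Let `z` be a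
nonnegative distribution over configurations (subsets of a finite item set `I`), each of total
utility at least `M`. Let `J` be the set of integrally allocated items (those whose total
`z`-mass is `1`) and `U` the union of the configurations in the support of `z`. Then for every
fractionally allocated item `i*` (i.e. `i* ∉ J`), the total utility of the items of `U`
other than `i*` and those of `J` is at least `M` minus the total utility of `J`. -/
theorem fractional_items_utility_bound
    {I : Type*} [Fintype I] [DecidableEq I]
    (u : I → ℝ) (hu : ∀ i, 0 ≤ u i) (M : ℝ)
    (z : Finset I → ℝ) (hz : ∀ S, 0 ≤ z S)
    (hz1 : ∑ S : Finset I, z S = 1)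
    (hzM : ∀ S, 0 < z S → M ≤ ∑ i ∈ S, u i)
    (J : Finset I)
    (hJ : ∀ i : I, i ∈ J ↔
      ∑ S ∈ Finset.univ.filter (fun S : Finset I => i ∈ S), z S = 1)
    (U : Finset I)
    (hU : ∀ i : I, i ∈ U ↔ ∃ S : Finset I, 0 < z S ∧ i ∈ S)
    (istar : I) (histar : istar ∉ J) :
    M - ∑ i ∈ J, u i ≤ ∑ i ∈ U \ insert istar J, u i := by
  have integral_iff (i : I) : i ∈ J ↔ ∀ S, 0 < z S → i ∈ S := by
    simp [hJ, ← hz1, sum_filter_eq_sum_iff_of_nonneg _ fun S _ => hz S]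
  obtain ⟨S, hSpos, hiS⟩ : ∃ S, 0 < z S ∧ istar ∉ S := by
    by_contra! h
    exact histar ((integral_iff istar).2 h)
  have hJS : J ⊆ S := fun j hj => (integral_iff j).1 hj S hSpos
  have hSJ : S \ J ⊆ U \ insert istar J := by
    intro i hi
    obtain ⟨hiS', hiJ⟩ := mem_sdiff.1 hi
    refine mem_sdiff.2 ⟨(hU i).2 ⟨S, hSpos, hiS'⟩, ?_⟩
    rw [mem_insert, not_or]
    exact ⟨by rintro rfl; exact hiS hiS', hiJ⟩
  calc M - ∑ i ∈ J, u i ≤ ∑ i ∈ S, u i - ∑ i ∈ J, u i := by linarith [hzM S hSpos]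
    _ = ∑ i ∈ S \ J, u i := by rw [← sum_sdiff hJS, add_sub_cancel_right]
    _ ≤ ∑ i ∈ U \ insert istar J, u i :=
      sum_le_sum_of_subset_of_nonneg hSJ fun i _ _ => hu i
end

section
/- There exists a natural number N such that for every natural number n ≥ N and every real ε with 8 · log(log n) / log n ≤ ε ≤ 1, setting h = 8/ε (a real number), one has ( (n : ℝ)^ε / (h + 1) )^h ≥ (n : ℝ)^7. -/
/-!
Write `L = log n` and `h = 8 / ε`. Taking logarithms, the inequality reads
`h (ε L - log (h + 1)) ≥ 7 L`, and since `h ε = 8` this is `h log (h + 1) ≤ L`.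
The lower bound on `ε` says exactly `h ≤ L / log L`, and once `log L ≥ 2` also `h + 1 ≤ L`,
so `h log (h + 1) ≤ (L / log L) log L = L`.
-/

open Real

lemma div_log_add_one_le_self {L : ℝ} (hL : exp 2 ≤ L) : L / log L + 1 ≤ L := by
  have h3 : 3 ≤ L := by linarith [add_one_le_exp 2]
  have hlogL : 2 ≤ log L := (le_log_iff_exp_le (by linarith)).2 hL
  have : L / log L ≤ L / 2 := div_le_div_of_nonneg_left (by linarith) two_pos hlogL
  linarith

lemma mul_log_add_one_le_of_le_div_log {h L : ℝ} (hL : exp 2 ≤ L) (h0 : 0 ≤ h)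
    (hh : h ≤ L / log L) : h * log (h + 1) ≤ L := by
  have hlogL : 0 < log L := log_pos (by linarith [add_one_le_exp 2])
  have hlog_le : log (h + 1) ≤ log L :=
    log_le_log (by linarith) (by linarith [div_log_add_one_le_self hL])
  calc h * log (h + 1) ≤ L / log L * log L :=
        mul_le_mul hh hlog_le (log_nonneg (by linarith)) (hh.trans' h0)
    _ = L := div_mul_cancel₀ L hlogL.ne'

lemma rpow_sub_one_le_of_mul_log_le {x ε c : ℝ} (hx : 0 < x) (hε : 0 < ε) (hc : 0 ≤ c)
    (hlog : c / ε * log (c / ε + 1) ≤ log x) :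
    x ^ (c - 1) ≤ (x ^ ε / (c / ε + 1)) ^ (c / ε) := by
  have hh : 0 < c / ε + 1 := by positivity
  rw [← log_le_log_iff (by positivity) (by positivity), log_rpow hx, log_rpow (by positivity),
    log_div (by positivity) hh.ne', log_rpow hx]
  have hcε : c / ε * (ε * log x) = c * log x := by field_simp
  rw [mul_sub, hcε]
  linarith

/-- the counting inequality behind the layered-solution argument. There is
a natural number `N` such that for all `n ≥ N` and all real `ε` with
`8 log log n / log n ≤ ε ≤ 1`, setting `h = 8/ε`, one has `(n^ε / (h+1))^h ≥ n^7`
(real powers, natural logarithm). -/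
theorem layered_counting_inequality :
    ∃ N : ℕ, ∀ n : ℕ, N ≤ n → ∀ ε : ℝ,
      8 * Real.log (Real.log n) / Real.log n ≤ ε → ε ≤ 1 →
      ((n : ℝ) ^ ε / (8 / ε + 1)) ^ (8 / ε) ≥ (n : ℝ) ^ (7 : ℝ) := by
  refine ⟨⌈exp (exp 2)⌉₊, fun n hn ε hε _ => ?_⟩
  have hn' : exp (exp 2) ≤ n := Nat.ceil_le.1 hn
  have hn0 : (0 : ℝ) < n := (exp_pos _).trans_le hn'
  have hL : exp 2 ≤ log n := (le_log_iff_exp_le hn0).2 hn'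
  have hL0 : 0 < log n := (exp_pos 2).trans_le hL
  have hlogL : 2 ≤ log (log n) := (le_log_iff_exp_le hL0).2 hL
  have hε0 : 0 < ε := hε.trans_lt' (by positivity)
  have hh : 8 / ε ≤ log n / log (log n) := by
    rw [div_le_div_iff₀ hε0 (by linarith)]
    linarith [(div_le_iff₀ hL0).1 hε]
  have key := mul_log_add_one_le_of_le_div_log hL (by positivity) hh
  simpa [show (8 : ℝ) - 1 = 7 by norm_num] using
    rpow_sub_one_le_of_mul_log_le hn0 hε0 (by norm_num) key
end
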